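/- There is a natural isomorphism of functors E ∘ F ≅ Id_C ⊕ B, where Id_C ⊕ B denotes the functor C → C sending an object W to the biproduct W ⊕ B(W) and a morphism φ to φ ⊕ B(φ). Explicitly, for W = (V, ι) the isomorphism is given by the morphisms ε̃₁ := ε₁ - ε₂∘ι : W → E(F(W)) and ε̃₂ := ε₁ + ε₂∘ι : B(W) → E(F(W)), with inverse components π̃₁ := (1/2)(π₁ + ι∘π₂) and π̃₂ := (1/2)(π₁ - ι∘π₂). -/

import Mathlib

/-!
On `V ⊕ V` the complex structure `J = -ε₁π₂ + ε₂π₁` of `E(F W)` commutes with `ι ⊕ ι`, and since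
`ι² = -1` the operator `-(ι ⊕ ι) J` is an involution. Its two eigen-summands are the images of
`ε̃₁ = ε₁ - ε₂ι` (where `J` acts as `ι`) and `ε̃₂ = ε₁ + ε₂ι` (where `J` acts as `-ι`), and
`π̃₁, π̃₂` are the corresponding halved projections.
-/

set_option linter.unusedSectionVars false

open CategoryTheory CategoryTheory.Limits

universe v u

variable (R : Type u) [Category.{v} R] [Abelian R] [CategoryTheory.Linear ℝ R]

/-- Objects of the category `C`: pairs `(V, ι)` with `ι ∘ ι = -1`. -/
structure CObj : Type max u v where
  V : R
  ι : V ⟶ V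
  hι : ι ≫ ι = -𝟙 V

variable {R}

instance : Category.{v} (CObj R) where
  Hom W₁ W₂ := { φ : W₁.V ⟶ W₂.V // W₁.ι ≫ φ = φ ≫ W₂.ι }
  id W := ⟨𝟙 W.V, by simp⟩
  comp f g := ⟨f.1 ≫ g.1, by
    rw [← Category.assoc, f.2, Category.assoc, g.2, Category.assoc]⟩
  id_comp f := Subtype.ext (Category.id_comp f.1)
  comp_id f := Subtype.ext (Category.comp_id f.1)
  assoc f g h := Subtype.ext (Category.assoc f.1 g.1 h.1)

@[ext]
lemma CObj.hom_ext {W₁ W₂ : CObj R} {f g : W₁ ⟶ W₂} (h : f.1 = g.1) : f = g :=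
  Subtype.ext h

@[simp]
lemma CObj.id_coe (W : CObj R) : (𝟙 W : W ⟶ W).1 = 𝟙 W.V := rfl

@[simp]
lemma CObj.comp_coe {W₁ W₂ W₃ : CObj R} (f : W₁ ⟶ W₂) (g : W₂ ⟶ W₃) :
    (f ≫ g).1 = f.1 ≫ g.1 := rfl

instance (W₁ W₂ : CObj R) : Zero (W₁ ⟶ W₂) := ⟨⟨0, by simp⟩⟩

instance (W₁ W₂ : CObj R) : Add (W₁ ⟶ W₂) :=
  ⟨fun f g => ⟨f.1 + g.1, by rw [Preadditive.comp_add, Preadditive.add_comp, f.2, g.2]⟩⟩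

instance (W₁ W₂ : CObj R) : Neg (W₁ ⟶ W₂) :=
  ⟨fun f => ⟨-f.1, by rw [Preadditive.comp_neg, Preadditive.neg_comp, f.2]⟩⟩

instance (W₁ W₂ : CObj R) : Sub (W₁ ⟶ W₂) :=
  ⟨fun f g => ⟨f.1 - g.1, by rw [Preadditive.comp_sub, Preadditive.sub_comp, f.2, g.2]⟩⟩

instance (W₁ W₂ : CObj R) : SMul ℕ (W₁ ⟶ W₂) :=
  ⟨fun n f => ⟨n • f.1, by rw [Linear.comp_smul, Linear.smul_comp, f.2]⟩⟩

instance (W₁ W₂ : CObj R) : SMul ℤ (W₁ ⟶ W₂) :=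
  ⟨fun n f => ⟨n • f.1, by rw [Linear.comp_smul, Linear.smul_comp, f.2]⟩⟩

@[simp] lemma CObj.zero_coe (W₁ W₂ : CObj R) : (0 : W₁ ⟶ W₂).1 = 0 := rfl
@[simp] lemma CObj.add_coe {W₁ W₂ : CObj R} (f g : W₁ ⟶ W₂) : (f + g).1 = f.1 + g.1 := rfl
@[simp] lemma CObj.neg_coe {W₁ W₂ : CObj R} (f : W₁ ⟶ W₂) : (-f).1 = -f.1 := rfl

instance (W₁ W₂ : CObj R) : AddCommGroup (W₁ ⟶ W₂) :=
  Function.Injective.addCommGroup (fun f : W₁ ⟶ W₂ => f.1) Subtype.val_injective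
    rfl (fun _ _ => rfl) (fun _ => rfl) (fun _ _ => rfl) (fun _ _ => rfl) (fun _ _ => rfl)

instance : Preadditive (CObj R) where
  add_comp P Q S f f' g := by apply Subtype.ext; exact Preadditive.add_comp _ _ _ f.1 f'.1 g.1
  comp_add P Q S f g g' := by apply Subtype.ext; exact Preadditive.comp_add _ _ _ f.1 g.1 g'.1

variable (R)

/-- The conjugation functor `B : C → C`. -/
def Bfunctor : CObj R ⥤ CObj R where
  obj W := ⟨W.V, -W.ι, by simp [W.hι]⟩
  map f := ⟨f.1, by simp [f.2]⟩
  map_id _ := rfl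
  map_comp _ _ := rfl

/-- The forgetful functor `F : C → R`. -/
def Ffunctor : CObj R ⥤ R where
  obj W := W.V
  map f := f.1
  map_id _ := rfl
  map_comp _ _ := rfl

/-- The complexification functor `E : R → C`. -/
noncomputable def Efunctor : R ⥤ CObj R where
  obj V :=
    { V := V ⊞ V
      ι := -(biprod.snd ≫ biprod.inl) + biprod.fst ≫ biprod.inr
      hι := by ext <;> simp }
  map φ := ⟨biprod.map φ φ, by ext <;> simp⟩
  map_id V := Subtype.ext (by ext <;> simp)
  map_comp f g := Subtype.ext (by ext <;> simp)

variable {R}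

/-- The biproduct `(V₁ ⊕ V₂, ι₁ ⊕ ι₂)` of two objects of `C`. -/
noncomputable def csum (W₁ W₂ : CObj R) : CObj R where
  V := W₁.V ⊞ W₂.V
  ι := biprod.map W₁.ι W₂.ι
  hι := by ext <;> simp [W₁.hι, W₂.hι]

/-- Multiplication by `i` as a morphism in `C`. -/
def iMor (W : CObj R) : W ⟶ W := ⟨W.ι, rfl⟩

variable (R)

/-- The functor `Id_C ⊕ B : C → C`. -/
noncomputable def idPlusB : CObj R ⥤ CObj R where
  obj W := csum W ((Bfunctor R).obj W)
  map {X Y} f := ⟨biprod.map f.1 f.1, by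
    show biprod.map X.ι (-X.ι) ≫ biprod.map f.1 f.1 = biprod.map f.1 f.1 ≫ biprod.map Y.ι (-Y.ι)
    ext <;> simp [f.2]⟩
  map_id W := Subtype.ext (by
    show biprod.map (𝟙 W.V) (𝟙 W.V) = 𝟙 (W.V ⊞ W.V)
    ext <;> simp)
  map_comp f g := Subtype.ext (by
    show biprod.map (f.1 ≫ g.1) (f.1 ≫ g.1) = biprod.map f.1 f.1 ≫ biprod.map g.1 g.1
    ext <;> simp)

namespace CObj

variable {R} (W : CObj R)

noncomputable abbrev eigenProj : W.V ⊞ W.V ⟶ W.V ⊞ W.V :=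
  biprod.lift (((1 : ℝ)/2) • (biprod.fst + biprod.snd ≫ W.ι))
    (((1 : ℝ)/2) • (biprod.fst - biprod.snd ≫ W.ι))

noncomputable abbrev eigenIncl : W.V ⊞ W.V ⟶ W.V ⊞ W.V :=
  biprod.desc (biprod.inl - W.ι ≫ biprod.inr) (biprod.inl + W.ι ≫ biprod.inr)

lemma complexStructure_comp_eigenProj :
    (-(biprod.snd ≫ biprod.inl) + biprod.fst ≫ biprod.inr) ≫ W.eigenProj =
      W.eigenProj ≫ biprod.map W.ι (-W.ι) := by
  ext <;> simp [W.hι]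

lemma eigenIncl_comp_complexStructure :
    biprod.map W.ι (-W.ι) ≫ W.eigenIncl =
      W.eigenIncl ≫ (-(biprod.snd ≫ biprod.inl) + biprod.fst ≫ biprod.inr) := by
  ext <;> simp [W.hι]

lemma eigenProj_comp_eigenIncl : W.eigenProj ≫ W.eigenIncl = 𝟙 (W.V ⊞ W.V) := by
  ext <;> simp [W.hι] <;> module

lemma eigenIncl_comp_eigenProj : W.eigenIncl ≫ W.eigenProj = 𝟙 (W.V ⊞ W.V) := by
  ext <;> simp [W.hι] <;> module

lemma biprod_map_comp_eigenProj {W₁ W₂ : CObj R} (f : W₁ ⟶ W₂) :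
    biprod.map f.1 f.1 ≫ W₂.eigenProj = W₁.eigenProj ≫ biprod.map f.1 f.1 := by
  ext <;> simp [f.2]

noncomputable def splitIso : (Efunctor R).obj W.V ≅ (idPlusB R).obj W where
  hom := ⟨W.eigenProj, W.complexStructure_comp_eigenProj⟩
  inv := ⟨W.eigenIncl, W.eigenIncl_comp_complexStructure⟩
  hom_inv_id := hom_ext W.eigenProj_comp_eigenIncl
  inv_hom_id := hom_ext W.eigenIncl_comp_eigenProj

end CObj

open scoped TensorProduct Quaternion

variable [EssentiallySmall.{v} R]

theorem statement2 :
    ∃ η : (Ffunctor R ⋙ Efunctor R) ≅ idPlusB R,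
      ∀ W : CObj R,
        (η.hom.app W).1 =
          biprod.lift (((1 : ℝ)/2) • (biprod.fst + biprod.snd ≫ W.ι))
            (((1 : ℝ)/2) • (biprod.fst - biprod.snd ≫ W.ι)) ∧
        (η.inv.app W).1 =
          biprod.desc (biprod.inl - W.ι ≫ biprod.inr) (biprod.inl + W.ι ≫ biprod.inr) :=
  ⟨NatIso.ofComponents CObj.splitIso
      fun f => CObj.hom_ext (CObj.biprod_map_comp_eigenProj f),
    fun _ => ⟨rfl, rfl⟩⟩
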